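/- Let f : (0,∞) → ℝ_{≥0} be a normalized operator monotone function, let ρ_AB be a bipartite density matrix on ℂ^{d_A} ⊗ ℂ^{d_B}, and let V : ℂ^{d_A} → ℂ^{d_{A'}} and W : ℂ^{d_B} → ℂ^{d_{B'}} be isometries (V†V = 1, W†W = 1). Then μ_f(A:B)_{ρ_AB} = μ_f(A':B')_{(V⊗W)ρ_AB(V⊗W)†}, and the same equality holds for μ_f^Lin. -/

import Mathlib

open scoped Kronecker ComplexOrder
open Matrix

noncomputable section

namespace QPaper

variable {ι ιA ιB ιA' ιB' ιR : Type*}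

/-- A density matrix: a positive semidefinite complex matrix of trace one. -/
def IsDensity [Fintype ι] (ρ : Matrix ι ι ℂ) : Prop :=
  ρ.PosSemidef ∧ ρ.trace = 1

/-- Apply `f : ℝ → ℝ` to a Hermitian matrix spectrally (junk value `0` otherwise). -/
def matFun [Fintype ι] [DecidableEq ι] (f : ℝ → ℝ) (A : Matrix ι ι ℂ) : Matrix ι ι ℂ :=
  if hA : A.IsHermitian then
    (hA.eigenvectorUnitary : Matrix ι ι ℂ) *
      Matrix.diagonal (fun i => (f (hA.eigenvalues i) : ℂ)) *
      star (hA.eigenvectorUnitary : Matrix ι ι ℂ)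
  else 0

/-- `f` is operator monotone on `(0,∞)`: it is continuous there and for all `n` and all
positive definite `A ≤ B` one has `f(A) ≤ f(B)` in the Loewner order. -/
def IsOperatorMonotone (f : ℝ → ℝ) : Prop :=
  ContinuousOn f (Set.Ioi 0) ∧
    ∀ (n : ℕ) (A B : Matrix (Fin n) (Fin n) ℂ), A.PosDef → B.PosDef →
      (B - A).PosSemidef → (matFun f B - matFun f A).PosSemidef

/-- `f` is symmetry inducing: `f x = x f (1/x)` for `x > 0`. -/
def IsSymmetryInducing (f : ℝ → ℝ) : Prop :=
  ∀ x : ℝ, 0 < x → f x = x * f x⁻¹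

/-- Real powers of a Hermitian matrix via the spectral decomposition. -/
def matPow [Fintype ι] [DecidableEq ι] (σ : Matrix ι ι ℂ) (t : ℝ) : Matrix ι ι ℂ :=
  if hσ : σ.IsHermitian then
    (hσ.eigenvectorUnitary : Matrix ι ι ℂ) *
      Matrix.diagonal (fun i => ((hσ.eigenvalues i ^ t : ℝ) : ℂ)) *
      star (hσ.eigenvectorUnitary : Matrix ι ι ℂ)
  else 0

/-- The operator `J_{f,σ}(X) = Σ_{i,j} λ_j f(λ_i/λ_j) Q_i X Q_j`. -/
def Jmap [Fintype ι] [DecidableEq ι] (f : ℝ → ℝ) (σ X : Matrix ι ι ℂ) : Matrix ι ι ℂ :=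
  if hσ : σ.IsHermitian then
    (hσ.eigenvectorUnitary : Matrix ι ι ℂ) *
      (Matrix.of fun i j =>
        ((hσ.eigenvalues j * f (hσ.eigenvalues i / hσ.eigenvalues j) : ℝ) : ℂ) *
          ((star (hσ.eigenvectorUnitary : Matrix ι ι ℂ) * X *
              (hσ.eigenvectorUnitary : Matrix ι ι ℂ)) i j)) *
      star (hσ.eigenvectorUnitary : Matrix ι ι ℂ)
  else 0

/-- The operator `J_{f,σ}⁻¹(X) = Σ_{i,j} (λ_j f(λ_i/λ_j))⁻¹ Q_i X Q_j`. -/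
def JmapInv [Fintype ι] [DecidableEq ι] (f : ℝ → ℝ) (σ X : Matrix ι ι ℂ) : Matrix ι ι ℂ :=
  if hσ : σ.IsHermitian then
    (hσ.eigenvectorUnitary : Matrix ι ι ℂ) *
      (Matrix.of fun i j =>
        (((hσ.eigenvalues j * f (hσ.eigenvalues i / hσ.eigenvalues j))⁻¹ : ℝ) : ℂ) *
          ((star (hσ.eigenvectorUnitary : Matrix ι ι ℂ) * X *
              (hσ.eigenvectorUnitary : Matrix ι ι ℂ)) i j)) *
      star (hσ.eigenvectorUnitary : Matrix ι ι ℂ)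
  else 0

/-- Hilbert–Schmidt inner product `⟨A,B⟩ = Tr[A†B]`. -/
def hsInner [Fintype ι] (A B : Matrix ι ι ℂ) : ℂ := (Aᴴ * B).trace

/-- Noncommutative variance `Var_{f,σ}(X) = ⟨X − Tr[σX]·1, J_{f,σ}(X − Tr[σX]·1)⟩`. -/
def varF [Fintype ι] [DecidableEq ι] (f : ℝ → ℝ) (σ X : Matrix ι ι ℂ) : ℂ :=
  hsInner (X - (σ * X).trace • (1 : Matrix ι ι ℂ))
    (Jmap f σ (X - (σ * X).trace • (1 : Matrix ι ι ℂ)))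

/-- Partial trace over the second (B) factor: `ρ_A`. -/
def ptraceB [Fintype ιB] (M : Matrix (ιA × ιB) (ιA × ιB) ℂ) : Matrix ιA ιA ℂ :=
  Matrix.of fun a a' => ∑ b, M (a, b) (a', b)

/-- Partial trace over the first (A) factor: `ρ_B`. -/
def ptraceA [Fintype ιA] (M : Matrix (ιA × ιB) (ιA × ιB) ℂ) : Matrix ιB ιB ℂ :=
  Matrix.of fun b b' => ∑ a, M (a, b) (a, b')

/-- Support projection of a Hermitian matrix. -/
def suppProj [Fintype ι] [DecidableEq ι] (σ : Matrix ι ι ℂ) : Matrix ι ι ℂ :=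
  if hσ : σ.IsHermitian then
    (hσ.eigenvectorUnitary : Matrix ι ι ℂ) *
      Matrix.diagonal (fun i => if 0 < hσ.eigenvalues i then (1 : ℂ) else 0) *
      star (hσ.eigenvectorUnitary : Matrix ι ι ℂ)
  else 0

/-- Rank-one spectral projection `Q_i` of a Hermitian matrix. -/
def eigProj [Fintype ι] [DecidableEq ι] {σ : Matrix ι ι ℂ} (hσ : σ.IsHermitian) (i : ι) :
    Matrix ι ι ℂ :=
  (hσ.eigenvectorUnitary : Matrix ι ι ℂ) * Matrix.single i i 1 *
    star (hσ.eigenvectorUnitary : Matrix ι ι ℂ)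

/-- `⟨X,X⟩_{f,σ} = Σ_{i,j} λ_j f(λ_i/λ_j) Tr[X† Q_i X Q_j]`, the sum running over the
strictly positive part of the spectrum of `σ`. -/
def innerF [Fintype ι] [DecidableEq ι] (f : ℝ → ℝ) (σ X : Matrix ι ι ℂ) : ℂ :=
  if hσ : σ.IsHermitian then
    ∑ i, ∑ j,
      if 0 < hσ.eigenvalues i ∧ 0 < hσ.eigenvalues j then
        ((hσ.eigenvalues j * f (hσ.eigenvalues i / hσ.eigenvalues j) : ℝ) : ℂ) *
          (Xᴴ * eigProj hσ i * X * eigProj hσ j).trace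
      else 0
  else 0

/-- The `f`-maximal correlation coefficient `μ_f(A:B)_ρ` (Hermitian optimizers). -/
def muF [Fintype ιA] [DecidableEq ιA] [Fintype ιB] [DecidableEq ιB]
    (f : ℝ → ℝ) (ρ : Matrix (ιA × ιB) (ιA × ιB) ℂ) : ℝ :=
  sSup { r : ℝ | ∃ (X : Matrix ιA ιA ℂ) (Y : Matrix ιB ιB ℂ),
    X.IsHermitian ∧ Y.IsHermitian ∧
    suppProj (ptraceB ρ) * X * suppProj (ptraceB ρ) = X ∧
    suppProj (ptraceA ρ) * Y * suppProj (ptraceA ρ) = Y ∧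
    (ptraceB ρ * X).trace = 0 ∧ (ptraceA ρ * Y).trace = 0 ∧
    innerF f (ptraceB ρ) X = 1 ∧ innerF f (ptraceA ρ) Y = 1 ∧
    r = ‖((X ⊗ₖ Yᴴ) * ρ).trace‖ }

/-- The linear-operator relaxation `μ_f^Lin(A:B)_ρ`. -/
def muLin [Fintype ιA] [DecidableEq ιA] [Fintype ιB] [DecidableEq ιB]
    (f : ℝ → ℝ) (ρ : Matrix (ιA × ιB) (ιA × ιB) ℂ) : ℝ :=
  sSup { r : ℝ | ∃ (X : Matrix ιA ιA ℂ) (Y : Matrix ιB ιB ℂ),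
    suppProj (ptraceB ρ) * X * suppProj (ptraceB ρ) = X ∧
    suppProj (ptraceA ρ) * Y * suppProj (ptraceA ρ) = Y ∧
    (ptraceB ρ * X).trace = 0 ∧ (ptraceA ρ * Y).trace = 0 ∧
    innerF f (ptraceB ρ) X = 1 ∧ innerF f (ptraceA ρ) Y = 1 ∧
    r = ‖((X ⊗ₖ Yᴴ) * ρ).trace‖ }

/-- `μ_{f_AM}(A:B)_ρ` with the simplified normalization `Tr[ρ_A X²] = 1`. -/
def muAM [Fintype ιA] [DecidableEq ιA] [Fintype ιB] [DecidableEq ιB]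
    (ρ : Matrix (ιA × ιB) (ιA × ιB) ℂ) : ℝ :=
  sSup { r : ℝ | ∃ (X : Matrix ιA ιA ℂ) (Y : Matrix ιB ιB ℂ),
    X.IsHermitian ∧ Y.IsHermitian ∧
    suppProj (ptraceB ρ) * X * suppProj (ptraceB ρ) = X ∧
    suppProj (ptraceA ρ) * Y * suppProj (ptraceA ρ) = Y ∧
    (ptraceB ρ * X).trace = 0 ∧ (ptraceA ρ * Y).trace = 0 ∧
    (ptraceB ρ * X * X).trace = 1 ∧ (ptraceA ρ * Y * Y).trace = 1 ∧
    r = ‖((X ⊗ₖ Y) * ρ).trace‖ }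

/-- `μ_{f_GM}(A:B)_τ` with the normalization `Tr[X τ_A^{1/2} X τ_A^{1/2}] = 1`. -/
def muGM [Fintype ιA] [DecidableEq ιA] [Fintype ιB] [DecidableEq ιB]
    (τ : Matrix (ιA × ιB) (ιA × ιB) ℂ) : ℝ :=
  sSup { r : ℝ | ∃ (X : Matrix ιA ιA ℂ) (Y : Matrix ιB ιB ℂ),
    X.IsHermitian ∧ Y.IsHermitian ∧
    suppProj (ptraceB τ) * X * suppProj (ptraceB τ) = X ∧
    suppProj (ptraceA τ) * Y * suppProj (ptraceA τ) = Y ∧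
    (ptraceB τ * X).trace = 0 ∧ (ptraceA τ * Y).trace = 0 ∧
    (X * matPow (ptraceB τ) (1 / 2) * X * matPow (ptraceB τ) (1 / 2)).trace = 1 ∧
    (Y * matPow (ptraceA τ) (1 / 2) * Y * matPow (ptraceA τ) (1 / 2)).trace = 1 ∧
    r = ‖((X ⊗ₖ Yᴴ) * τ).trace‖ }

/-- `χ²_f(ρ‖σ)`, summed over the strictly positive part of the spectrum of `σ`. -/
def chiSq [Fintype ι] [DecidableEq ι] (f : ℝ → ℝ) (ρ σ : Matrix ι ι ℂ) : ℝ :=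
  if hσ : σ.IsHermitian then
    ∑ i, ∑ j,
      if 0 < hσ.eigenvalues i ∧ 0 < hσ.eigenvalues j then
        (hσ.eigenvalues j * f (hσ.eigenvalues i / hσ.eigenvalues j))⁻¹ *
          Complex.normSq
            ((star (hσ.eigenvectorUnitary : Matrix ι ι ℂ) * (ρ - σ) *
              (hσ.eigenvectorUnitary : Matrix ι ι ℂ)) i j)
      else 0
  else 0

/-- Support inclusion `supp ρ ⊆ supp σ` (as kernel containment). -/
def SuppLE [Fintype ι] (ρ σ : Matrix ι ι ℂ) : Prop :=
  ∀ v : ι → ℂ, σ.mulVec v = 0 → ρ.mulVec v = 0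

/-- The input-dependent contraction coefficient `η_{χ²_f}(E,σ)`. -/
def etaChi [Fintype ιA] [DecidableEq ιA] [Fintype ιB] [DecidableEq ιB]
    (f : ℝ → ℝ) (E : Matrix ιA ιA ℂ → Matrix ιB ιB ℂ) (σ : Matrix ιA ιA ℂ) : ℝ :=
  sSup { r : ℝ | ∃ ρ : Matrix ιA ιA ℂ, IsDensity ρ ∧ ρ ≠ σ ∧ SuppLE ρ σ ∧
    r = chiSq f (E ρ) (E σ) / chiSq f ρ σ }

/-- `χ²_f(ρ‖σ) = ⟨ρ−σ, J_{f,σ}⁻¹(ρ−σ)⟩` (Hilbert–Schmidt form). -/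
def chiHS [Fintype ι] [DecidableEq ι] (f : ℝ → ℝ) (ρ σ : Matrix ι ι ℂ) : ℂ :=
  hsInner (ρ - σ) (JmapInv f σ (ρ - σ))

/-- A positive map. -/
def IsPositiveMap [Fintype ιA] [Fintype ιB] (E : Matrix ιA ιA ℂ → Matrix ιB ιB ℂ) : Prop :=
  ∀ X, X.PosSemidef → (E X).PosSemidef

/-- A trace-preserving map. -/
def IsTracePreserving [Fintype ιA] [Fintype ιB]
    (E : Matrix ιA ιA ℂ → Matrix ιB ιB ℂ) : Prop :=
  ∀ X, (E X).trace = X.trace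

/-- The map `E` applied blockwise to a 2×2 block matrix. -/
def blockApply (E : Matrix ιA ιA ℂ → Matrix ιB ιB ℂ)
    (M : Matrix (Fin 2 × ιA) (Fin 2 × ιA) ℂ) : Matrix (Fin 2 × ιB) (Fin 2 × ιB) ℂ :=
  Matrix.of fun x y => E (Matrix.of fun a b => M (x.1, a) (y.1, b)) x.2 y.2

/-- 2-positivity. -/
def Is2Positive [Fintype ιA] [Fintype ιB] (E : Matrix ιA ιA ℂ → Matrix ιB ιB ℂ) : Prop :=
  ∀ M, M.PosSemidef → (blockApply E M).PosSemidef

/-- The Hilbert–Schmidt adjoint `E*` of a linear map `E`. -/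
def hsAdjoint [Fintype ιA] [DecidableEq ιA] [Fintype ιB]
    (E : Matrix ιA ιA ℂ → Matrix ιB ιB ℂ) (Y : Matrix ιB ιB ℂ) : Matrix ιA ιA ℂ :=
  Matrix.of fun a b => ((E (Matrix.single a b 1))ᴴ * Y).trace

/-- The Schwarz inequality `Φ(x†x) ≥ Φ(x)†Φ(x)`. -/
def IsSchwarz [Fintype ιA] [Fintype ιB] (Φ : Matrix ιA ιA ℂ → Matrix ιB ιB ℂ) : Prop :=
  ∀ x, (Φ (xᴴ * x) - (Φ x)ᴴ * Φ x).PosSemidef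

/-- A unital Schwarz map. -/
def IsUnitalSchwarz [Fintype ιA] [DecidableEq ιA] [Fintype ιB] [DecidableEq ιB]
    (Φ : Matrix ιA ιA ℂ → Matrix ιB ιB ℂ) : Prop :=
  IsLinearMap ℂ Φ ∧ Φ 1 = 1 ∧ IsSchwarz Φ

/-- `E` is the Hilbert–Schmidt adjoint of `Φ`, i.e. `⟨Φ A, B⟩ = ⟨A, E B⟩`. -/
def IsAdjointPair' [Fintype ιA] [Fintype ιB]
    (Φ : Matrix ιB ιB ℂ → Matrix ιA ιA ℂ) (E : Matrix ιA ιA ℂ → Matrix ιB ιB ℂ) : Prop :=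
  ∀ (A : Matrix ιB ιB ℂ) (B : Matrix ιA ιA ℂ), ((Φ A)ᴴ * B).trace = (Aᴴ * E B).trace

/-- `E` is the Hilbert–Schmidt adjoint of some unital Schwarz map. -/
def IsAdjointOfUnitalSchwarz [Fintype ιA] [DecidableEq ιA] [Fintype ιB] [DecidableEq ιB]
    (E : Matrix ιA ιA ℂ → Matrix ιB ιB ℂ) : Prop :=
  ∃ Φ : Matrix ιB ιB ℂ → Matrix ιA ιA ℂ, IsUnitalSchwarz Φ ∧ IsAdjointPair' Φ E

/-- The tensor product `E ⊗ F` of maps, acting on bipartite matrices. -/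
def mapKron [Fintype ιA] [DecidableEq ιA]
    (E : Matrix ιA ιA ℂ → Matrix ιA' ιA' ℂ) (F : Matrix ιB ιB ℂ → Matrix ιB' ιB' ℂ)
    (M : Matrix (ιA × ιB) (ιA × ιB) ℂ) : Matrix (ιA' × ιB') (ιA' × ιB') ℂ :=
  ∑ a : ιA, ∑ c : ιA,
    E (Matrix.single a c 1) ⊗ₖ F (Matrix.of fun b d => M (a, b) (c, d))

/-- `id ⊗ E` acting on bipartite matrices (E acting on the second factor). -/
def idKron (E : Matrix ιA ιA ℂ → Matrix ιB ιB ℂ)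
    (M : Matrix (ιR × ιA) (ιR × ιA) ℂ) : Matrix (ιR × ιB) (ιR × ιB) ℂ :=
  Matrix.of fun x y => E (Matrix.of fun a a' => M (x.1, a) (y.1, a')) x.2 y.2

/-- The Choi matrix of a map. -/
def choi [Fintype ιA] [DecidableEq ιA] (E : Matrix ιA ιA ℂ → Matrix ιB ιB ℂ) :
    Matrix (ιA × ιB) (ιA × ιB) ℂ :=
  Matrix.of fun x y => E (Matrix.single x.1 y.1 1) x.2 y.2

/-- A quantum channel: a trace-preserving linear map with positive semidefinite Choi matrix. -/
def IsQChannel [Fintype ιA] [DecidableEq ιA] [Fintype ιB]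
    (E : Matrix ιA ιA ℂ → Matrix ιB ιB ℂ) : Prop :=
  IsLinearMap ℂ E ∧ IsTracePreserving E ∧ (choi E).PosSemidef

/-- The Schrödinger time-reversal map `S_{f,E,σ} = J_{f,σ} ∘ E* ∘ J_{f,E(σ)}⁻¹`. -/
def Smap [Fintype ιA] [DecidableEq ιA] [Fintype ιB] [DecidableEq ιB]
    (f : ℝ → ℝ) (E : Matrix ιA ιA ℂ → Matrix ιB ιB ℂ) (σ : Matrix ιA ιA ℂ)
    (X : Matrix ιB ιB ℂ) : Matrix ιA ιA ℂ :=
  Jmap f σ (hsAdjoint E (JmapInv f (E σ) X))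

/-- Rearrange a tuple of reals in decreasing order. -/
def sortedDesc {n : ℕ} (v : Fin n → ℝ) : Fin n → ℝ :=
  fun i => v (Tuple.sort v i.rev)

/-- The decreasingly ordered singular values of a matrix. -/
def svalsFin {m n : ℕ} (M : Matrix (Fin m) (Fin n) ℂ) : Fin n → ℝ :=
  sortedDesc fun i =>
    Real.sqrt ((Matrix.posSemidef_conjTranspose_mul_self M).1.eigenvalues i)

/-- The `k`-th largest singular value (0-indexed; padded with zeros). -/
def sval {m n : ℕ} (M : Matrix (Fin m) (Fin n) ℂ) (k : ℕ) : ℝ :=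
  if h : k < n then svalsFin M ⟨k, h⟩ else 0

/-- The realignment `R(M)_{(b,b'),(a,a')} = M_{(a,b),(a',b')}` of a bipartite matrix. -/
def realign {dA dB : ℕ} (M : Matrix (Fin dA × Fin dB) (Fin dA × Fin dB) ℂ) :
    Matrix (Fin (dB * dB)) (Fin (dA * dA)) ℂ :=
  Matrix.of fun b a =>
    M ((finProdFinEquiv.symm a).1, (finProdFinEquiv.symm b).1)
      ((finProdFinEquiv.symm a).2, (finProdFinEquiv.symm b).2)

/-- The trace norm `‖M‖₁ = Tr[(M†M)^{1/2}]`. -/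
def traceNorm {m n : Type*} [Fintype m] [Fintype n] [DecidableEq n] (M : Matrix m n ℂ) : ℝ :=
  ∑ i, Real.sqrt ((Matrix.posSemidef_conjTranspose_mul_self M).1.eigenvalues i)

/-- Trace distance. -/
def traceDist [Fintype ι] [DecidableEq ι] (ρ σ : Matrix ι ι ℂ) : ℝ :=
  (1 / 2) * traceNorm (ρ - σ)

/-- The smallest eigenvalue of a Hermitian matrix. -/
def lamMin [Fintype ι] [DecidableEq ι] (σ : Matrix ι ι ℂ) : ℝ :=
  if hσ : σ.IsHermitian then ⨅ i, hσ.eigenvalues i else 0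

/-- `D_max(ρ‖σ) = log₂ ‖σ^{-1/2} ρ σ^{-1/2}‖_∞`. -/
def dMax {d : ℕ} (ρ σ : Matrix (Fin d) (Fin d) ℂ) : ℝ :=
  Real.logb 2 (sval (matPow σ (-(1 / 2)) * ρ * matPow σ (-(1 / 2))) 0)

/-- `Tr[ρ log₂ σ]`, evaluated through a spectral decomposition of `σ`. -/
def trlog2 [Fintype ι] [DecidableEq ι] (ρ σ : Matrix ι ι ℂ) : ℝ :=
  if hσ : σ.IsHermitian then
    ∑ j, Real.logb 2 (hσ.eigenvalues j) *
      ((star (hσ.eigenvectorUnitary : Matrix ι ι ℂ) * ρ *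
        (hσ.eigenvectorUnitary : Matrix ι ι ℂ)) j j).re
  else 0

/-- The quantum relative entropy `D(ρ‖σ) = Tr[ρ log₂ ρ] − Tr[ρ log₂ σ]` (base 2). -/
def relEnt [Fintype ι] [DecidableEq ι] (ρ σ : Matrix ι ι ℂ) : ℝ :=
  trlog2 ρ ρ - trlog2 ρ σ

/-- The input-dependent contraction coefficient of the relative entropy. -/
def etaRelEnt [Fintype ιA] [DecidableEq ιA] [Fintype ιB] [DecidableEq ιB]
    (E : Matrix ιA ιA ℂ → Matrix ιB ιB ℂ) (σ : Matrix ιA ιA ℂ) : ℝ :=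
  sSup { r : ℝ | ∃ ρ : Matrix ιA ιA ℂ, IsDensity ρ ∧ ρ ≠ σ ∧ SuppLE ρ σ ∧
    r = relEnt (E ρ) (E σ) / relEnt ρ σ }

/-- The product state `ρ_AB ⊗ σ_{A'B'}` regarded as a bipartite matrix on
`(AA') ⊗ (BB')`. -/
def prodState {dA dB dA' dB' : ℕ}
    (ρ : Matrix (Fin dA × Fin dB) (Fin dA × Fin dB) ℂ)
    (σ : Matrix (Fin dA' × Fin dB') (Fin dA' × Fin dB') ℂ) :
    Matrix ((Fin dA × Fin dA') × (Fin dB × Fin dB'))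
      ((Fin dA × Fin dA') × (Fin dB × Fin dB')) ℂ :=
  Matrix.of fun x y =>
    ρ (x.1.1, x.2.1) (y.1.1, y.2.1) * σ (x.1.2, x.2.2) (y.1.2, y.2.2)

/-- The `n`-fold product state `ρ^{⊗n}` regarded as bipartite with parts `Aⁿ` and `Bⁿ`. -/
def prodPow {dA dB : ℕ} (ρ : Matrix (Fin dA × Fin dB) (Fin dA × Fin dB) ℂ) (n : ℕ) :
    Matrix ((Fin n → Fin dA) × (Fin n → Fin dB)) ((Fin n → Fin dA) × (Fin n → Fin dB)) ℂ :=
  Matrix.of fun x y => ∏ l, ρ (x.1 l, x.2 l) (y.1 l, y.2 l)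

/-- `μ^Lin_{f_k}` in the positive-definite-marginal normalization
`⟨X,X⟩ = Tr[X† ρ_A^k X ρ_A^{1−k}]`. -/
def muLin9 {dA dB : ℕ} (k : ℝ) (ρ : Matrix (Fin dA × Fin dB) (Fin dA × Fin dB) ℂ) : ℝ :=
  sSup { r : ℝ | ∃ (X : Matrix (Fin dA) (Fin dA) ℂ) (Y : Matrix (Fin dB) (Fin dB) ℂ),
    (ptraceB ρ * X).trace = 0 ∧ (ptraceA ρ * Y).trace = 0 ∧
    (Xᴴ * matPow (ptraceB ρ) k * X * matPow (ptraceB ρ) (1 - k)).trace = 1 ∧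
    (Yᴴ * matPow (ptraceA ρ) k * Y * matPow (ptraceA ρ) (1 - k)).trace = 1 ∧
    r = ‖((X ⊗ₖ Yᴴ) * ρ).trace‖ }

/-- `χ²_GM(ρ‖σ) = Tr[(ρ−σ)σ^{−1/2}(ρ−σ)σ^{−1/2}]` for positive definite `σ`. -/
def chiGM16 {d : ℕ} (ρ σ : Matrix (Fin d) (Fin d) ℂ) : ℝ :=
  (((ρ - σ) * matPow σ (-(1 / 2)) * (ρ - σ) * matPow σ (-(1 / 2))).trace).re

/-- `η_{χ²_GM}(E,σ)` (no support restriction, `σ` positive definite). -/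
def etaGM16 {dA dB : ℕ} (E : Matrix (Fin dA) (Fin dA) ℂ → Matrix (Fin dB) (Fin dB) ℂ)
    (σ : Matrix (Fin dA) (Fin dA) ℂ) : ℝ :=
  sSup { r : ℝ | ∃ ρ : Matrix (Fin dA) (Fin dA) ℂ, IsDensity ρ ∧ ρ ≠ σ ∧
    r = chiGM16 (E ρ) (E σ) / chiGM16 ρ σ }

/-- A dimension-indexed family of functionals satisfying the data processing inequality. -/
def DPIFamily (D : (d : ℕ) → Matrix (Fin d) (Fin d) ℂ → Matrix (Fin d) (Fin d) ℂ → ℝ) :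
    Prop :=
  ∀ (d d' : ℕ) (Φ : Matrix (Fin d) (Fin d) ℂ → Matrix (Fin d') (Fin d') ℂ),
    IsQChannel Φ → ∀ ρ₁ ρ₂ : Matrix (Fin d) (Fin d) ℂ, IsDensity ρ₁ → IsDensity ρ₂ →
      D d' (Φ ρ₁) (Φ ρ₂) ≤ D d ρ₁ ρ₂

/-- The contraction coefficient of a functional family. -/
def etaD {dA dB : ℕ}
    (D : (d : ℕ) → Matrix (Fin d) (Fin d) ℂ → Matrix (Fin d) (Fin d) ℂ → ℝ)
    (E : Matrix (Fin dA) (Fin dA) ℂ → Matrix (Fin dB) (Fin dB) ℂ)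
    (σ : Matrix (Fin dA) (Fin dA) ℂ) : ℝ :=
  sSup { r : ℝ | ∃ ρ : Matrix (Fin dA) (Fin dA) ℂ, IsDensity ρ ∧ ρ ≠ σ ∧
    D dA ρ σ ≠ 0 ∧ r = D dB (E ρ) (E σ) / D dA ρ σ }

/-- `J_{f,ρ⊗σ} = J_{f,ρ} ⊗ J_{f,σ}` for all positive definite density matrices. -/
def JmapMultiplicative (f : ℝ → ℝ) (dA dA' : ℕ) : Prop :=
  ∀ (ρ : Matrix (Fin dA) (Fin dA) ℂ) (σ : Matrix (Fin dA') (Fin dA') ℂ),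
    ρ.PosDef → ρ.trace = 1 → σ.PosDef → σ.trace = 1 →
    ∀ M : Matrix (Fin dA × Fin dA') (Fin dA × Fin dA') ℂ,
      Jmap f (ρ ⊗ₖ σ) M = mapKron (Jmap f ρ) (Jmap f σ) M

/-!
Conjugation `M ↦ V M Vᴴ` by an isometry is a non-unital ⋆-homomorphism, so it commutes with the
continuous functional calculus of every function vanishing at `0`. Hence it maps the support
projection of `σ` to that of `V σ Vᴴ`, and the spectral projections of `σ` for nonzero eigenvalues
to those of `V σ Vᴴ`; since `⟨X,X⟩_{f,σ}` only involves the positive eigenvalues, it is invariant: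
`⟨V X Vᴴ, V X Vᴴ⟩_{f,VσVᴴ} = ⟨X,X⟩_{f,σ}`. The marginals of `(V ⊗ W) ρ (V ⊗ W)ᴴ` are `V ρ_A Vᴴ` and
`W ρ_B Wᴴ`, and `X ↦ V X Vᴴ` is a bijection from operators supported on `supp ρ_A` onto those
supported on `supp (V ρ_A Vᴴ)` which preserves every constraint and the objective. So both
optimisation problems have the same set of values.
-/

lemma trace_conj_mul {p q : Type*} [Fintype p] [Fintype q] (K : Matrix p q ℂ)
    (ρ : Matrix q q ℂ) (T : Matrix p p ℂ) :
    (K * ρ * Kᴴ * T).trace = (ρ * (Kᴴ * T * K)).trace := by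
  rw [Matrix.mul_assoc K ρ Kᴴ, Matrix.mul_assoc K (ρ * Kᴴ) T, Matrix.trace_mul_comm,
    Matrix.mul_assoc (ρ * Kᴴ) T K, Matrix.mul_assoc ρ Kᴴ (T * K), Matrix.mul_assoc Kᴴ T K]

lemma conjTranspose_conj {m n : Type*} [Fintype n] (V : Matrix m n ℂ) (M : Matrix n n ℂ) :
    (V * M * Vᴴ)ᴴ = V * Mᴴ * Vᴴ := by
  simp only [conjTranspose_mul, conjTranspose_conjTranspose, Matrix.mul_assoc]

lemma sum_sum_eq_sum_fiberwise {ι κ M : Type*} [Fintype ι] [DecidableEq κ] [AddCommMonoid M]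
    {t : Finset κ} {g : ι → κ} (hg : ∀ i, g i ∈ t) (G : ι → ι → M) :
    ∑ i, ∑ j, G i j = ∑ a ∈ t, ∑ b ∈ t, ∑ i with g i = a, ∑ j with g j = b, G i j := by
  refine Eq.symm <| (Finset.sum_congr rfl fun a _ => Finset.sum_comm).trans ?_
  simp only [Finset.sum_fiberwise_of_maps_to fun i _ => hg i]

section Isometry

variable {n m : Type*} [Fintype n] [DecidableEq n] [Fintype m] {V : Matrix m n ℂ}

lemma conj_mul_conj_of_isometry (hV : Vᴴ * V = 1) (P Q : Matrix n n ℂ) :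
    (V * P * Vᴴ) * (V * Q * Vᴴ) = V * (P * Q) * Vᴴ := by
  simp only [Matrix.mul_assoc, ← Matrix.mul_assoc Vᴴ V, hV, Matrix.one_mul]

lemma conj_injective_of_isometry (hV : Vᴴ * V = 1) :
    Function.Injective fun M : Matrix n n ℂ => V * M * Vᴴ := fun M N h => by
  have hinv : ∀ M : Matrix n n ℂ, Vᴴ * (V * M * Vᴴ) * V = M := fun M => by
    simp only [Matrix.mul_assoc, ← Matrix.mul_assoc Vᴴ V, hV, Matrix.one_mul, Matrix.mul_one]
  simpa only [hinv] using congrArg (Vᴴ * · * V) h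

lemma isHermitian_conj_iff (hV : Vᴴ * V = 1) (X : Matrix n n ℂ) :
    (V * X * Vᴴ).IsHermitian ↔ X.IsHermitian := by
  rw [IsHermitian, IsHermitian, conjTranspose_conj, (conj_injective_of_isometry hV).eq_iff]

lemma trace_conj_of_isometry (hV : Vᴴ * V = 1) (M : Matrix n n ℂ) :
    (V * M * Vᴴ).trace = M.trace := by
  rw [trace_mul_cycle, hV, Matrix.one_mul]

lemma trace_conj_mul_conj (hV : Vᴴ * V = 1) (σ X : Matrix n n ℂ) :
    (V * σ * Vᴴ * (V * X * Vᴴ)).trace = (σ * X).trace := by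
  rw [conj_mul_conj_of_isometry hV, trace_conj_of_isometry hV]

@[simps]
def isometryConj (hV : Vᴴ * V = 1) : Matrix n n ℂ →⋆ₙₐ[ℂ] Matrix m m ℂ where
  toFun M := V * M * Vᴴ
  map_smul' c M := by simp
  map_zero' := by simp
  map_add' M N := by simp [Matrix.mul_add, Matrix.add_mul]
  map_mul' M N := (conj_mul_conj_of_isometry hV M N).symm
  map_star' M := by simp [star_eq_conjTranspose, Matrix.mul_assoc]

end Isometry

section FunctionalCalculus

variable {n m : Type*} [Fintype n] [DecidableEq n] [Fintype m] [DecidableEq m]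
  {V : Matrix m n ℂ} {σ : Matrix n n ℂ}

lemma continuousOn_quasispectrum (g : ℝ → ℝ) (A : Matrix n n ℂ) :
    ContinuousOn g (quasispectrum ℝ A) := by
  rw [quasispectrum_eq_spectrum_union_zero]
  exact (A.finite_real_spectrum.union (Set.finite_singleton 0)).continuousOn g

lemma cfcₙ_eq_cfc_of_map_zero {g : ℝ → ℝ} (hg : g 0 = 0) (A : Matrix n n ℂ) :
    cfcₙ g A = cfc g A :=
  cfcₙ_eq_cfc (R := ℝ) (p := IsSelfAdjoint) (continuousOn_quasispectrum g A) hg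

lemma cfc_conj_isometry (hV : Vᴴ * V = 1) {g : ℝ → ℝ} (hg : g 0 = 0) (hσ : σ.IsHermitian) :
    cfc g (V * σ * Vᴴ) = V * cfc g σ * Vᴴ := by
  have h := (isometryConj hV).map_cfcₙ (R := ℝ) (p := IsSelfAdjoint) (q := IsSelfAdjoint) g σ
    (continuousOn_quasispectrum g σ) hg
    (by change Continuous fun M : Matrix n n ℂ => V * M * Vᴴ; fun_prop)
    hσ.isSelfAdjoint (isHermitian_mul_mul_conjTranspose V hσ).isSelfAdjoint
  rw [isometryConj_apply, isometryConj_apply, cfcₙ_eq_cfc_of_map_zero hg,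
    cfcₙ_eq_cfc_of_map_zero hg] at h
  exact h.symm

lemma matFun_eq_cfc (hσ : σ.IsHermitian) (g : ℝ → ℝ) : matFun g σ = cfc g σ := by
  rw [matFun, dif_pos hσ, hσ.cfc_eq, IsHermitian.cfc, Unitary.conjStarAlgAut_apply]
  rfl

lemma matFun_conj_isometry (hV : Vᴴ * V = 1) {g : ℝ → ℝ} (hg : g 0 = 0) (hσ : σ.IsHermitian) :
    matFun g (V * σ * Vᴴ) = V * matFun g σ * Vᴴ := by
  rw [matFun_eq_cfc hσ, matFun_eq_cfc (isHermitian_mul_mul_conjTranspose V hσ),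
    cfc_conj_isometry hV hg hσ]

lemma suppProj_eq_matFun (σ : Matrix n n ℂ) :
    suppProj σ = matFun (fun x => if 0 < x then 1 else 0) σ := by
  unfold suppProj matFun
  split_ifs
  · congr; ext; split_ifs <;> simp [*]
  · rfl

lemma suppProj_conj_isometry (hV : Vᴴ * V = 1) (hσ : σ.IsHermitian) :
    suppProj (V * σ * Vᴴ) = V * suppProj σ * Vᴴ := by
  simp only [suppProj_eq_matFun]
  exact matFun_conj_isometry hV (by simp) hσ

lemma supported_conj_iff (hV : Vᴴ * V = 1) (hσ : σ.IsHermitian) (X : Matrix n n ℂ) :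
    suppProj (V * σ * Vᴴ) * (V * X * Vᴴ) * suppProj (V * σ * Vᴴ) = V * X * Vᴴ ↔
      suppProj σ * X * suppProj σ = X := by
  rw [suppProj_conj_isometry hV hσ, conj_mul_conj_of_isometry hV, conj_mul_conj_of_isometry hV,
    (conj_injective_of_isometry hV).eq_iff]

lemma exists_conj_of_supported (hV : Vᴴ * V = 1) (hσ : σ.IsHermitian) {X' : Matrix m m ℂ}
    (hX' : suppProj (V * σ * Vᴴ) * X' * suppProj (V * σ * Vᴴ) = X') :
    ∃ X : Matrix n n ℂ, X' = V * X * Vᴴ := by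
  refine ⟨suppProj σ * (Vᴴ * X' * V) * suppProj σ, ?_⟩
  conv_lhs => rw [← hX', suppProj_conj_isometry hV hσ]
  simp only [Matrix.mul_assoc]

def innerWeight (f : ℝ → ℝ) (μ ν : ℝ) : ℂ :=
  if 0 < μ ∧ 0 < ν then ((ν * f (μ / ν) : ℝ) : ℂ) else 0

def specProj (σ : Matrix n n ℂ) (μ : ℝ) : Matrix n n ℂ :=
  matFun (fun x => if x = μ then 1 else 0) σ

lemma matFun_eq_sum_eigProj (hσ : σ.IsHermitian) (g : ℝ → ℝ) :
    matFun g σ = ∑ i, (g (hσ.eigenvalues i) : ℂ) • eigProj hσ i := by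
  rw [matFun, dif_pos hσ, ← sum_single_eq_diagonal, Finset.mul_sum, Finset.sum_mul]
  refine Finset.sum_congr rfl fun i _ => ?_
  rw [eigProj, ← Matrix.smul_mul, ← Matrix.mul_smul, smul_single, smul_eq_mul, mul_one]

lemma specProj_eq_sum_eigProj (hσ : σ.IsHermitian) (μ : ℝ) :
    specProj σ μ = ∑ i with hσ.eigenvalues i = μ, eigProj hσ i := by
  rw [specProj, matFun_eq_sum_eigProj hσ, Finset.sum_filter]
  refine Finset.sum_congr rfl fun i _ => ?_
  split_ifs <;> simp

lemma specProj_conj_isometry (hV : Vᴴ * V = 1) (hσ : σ.IsHermitian) {μ : ℝ} (hμ : μ ≠ 0) :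
    specProj (V * σ * Vᴴ) μ = V * specProj σ μ * Vᴴ :=
  matFun_conj_isometry hV (g := fun x => if x = μ then 1 else 0) (if_neg hμ.symm) hσ

lemma innerF_eq_sum_eigProj (f : ℝ → ℝ) (hσ : σ.IsHermitian) (X : Matrix n n ℂ) :
    innerF f σ X = ∑ i, ∑ j, innerWeight f (hσ.eigenvalues i) (hσ.eigenvalues j) *
      (Xᴴ * eigProj hσ i * X * eigProj hσ j).trace := by
  simp only [innerF, dif_pos hσ, innerWeight, ite_mul, zero_mul]

lemma innerF_eq_sum_specProj (f : ℝ → ℝ) (hσ : σ.IsHermitian) (X : Matrix n n ℂ)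
    {S : Finset ℝ} (hS : ∀ i, hσ.eigenvalues i ∈ S) :
    innerF f σ X = ∑ μ ∈ S, ∑ ν ∈ S, innerWeight f μ ν *
      (Xᴴ * specProj σ μ * X * specProj σ ν).trace := by
  rw [innerF_eq_sum_eigProj f hσ, sum_sum_eq_sum_fiberwise hS]
  refine Finset.sum_congr rfl fun μ _ => Finset.sum_congr rfl fun ν _ => ?_
  simp only [specProj_eq_sum_eigProj hσ, Finset.mul_sum, Finset.sum_mul, trace_sum]
  rw [Finset.sum_comm]
  refine Finset.sum_congr rfl fun i hi => Finset.sum_congr rfl fun j hj => ?_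
  rw [(Finset.mem_filter.mp hi).2, (Finset.mem_filter.mp hj).2]

lemma innerF_conj_isometry (f : ℝ → ℝ) (hV : Vᴴ * V = 1) (hσ : σ.IsHermitian)
    (X : Matrix n n ℂ) : innerF f (V * σ * Vᴴ) (V * X * Vᴴ) = innerF f σ X := by
  have hσ' := isHermitian_mul_mul_conjTranspose V hσ
  -- The eigenvectors of `V σ Vᴴ` are unrelated to those of `σ`, but its spectral projections
  -- for nonzero eigenvalues are not, and the weight of the eigenvalue `0` vanishes.
  set S := Finset.univ.image hσ.eigenvalues ∪ Finset.univ.image hσ'.eigenvalues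
  rw [innerF_eq_sum_specProj f hσ X (S := S) (fun i => by simp [S]),
    innerF_eq_sum_specProj f hσ' _ (S := S) (fun i => by simp [S])]
  refine Finset.sum_congr rfl fun μ _ => Finset.sum_congr rfl fun ν _ => ?_
  by_cases hμν : 0 < μ ∧ 0 < ν
  · rw [specProj_conj_isometry hV hσ hμν.1.ne', specProj_conj_isometry hV hσ hμν.2.ne',
      conjTranspose_conj, conj_mul_conj_of_isometry hV, conj_mul_conj_of_isometry hV,
      conj_mul_conj_of_isometry hV, trace_conj_of_isometry hV]
  · simp [innerWeight, hμν]

end FunctionalCalculus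

section Bipartite

variable {κA κB κA' κB' : Type*} [Fintype κA] [Fintype κB] [Fintype κA'] [Fintype κB']
  {ρ : Matrix (κA × κB) (κA × κB) ℂ} {V : Matrix κA' κA ℂ} {W : Matrix κB' κB ℂ}

lemma trace_mul_kronecker_one [DecidableEq κB] (M : Matrix (κA × κB) (κA × κB) ℂ)
    (N : Matrix κA κA ℂ) :
    (M * (N ⊗ₖ (1 : Matrix κB κB ℂ))).trace = (ptraceB M * N).trace := by
  simp only [Matrix.trace, Matrix.diag_apply, Matrix.mul_apply, Matrix.kroneckerMap_apply,
    ptraceB, Matrix.of_apply, Matrix.one_apply, Fintype.sum_prod_type, mul_ite, mul_one,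
    mul_zero, Finset.sum_ite_eq', Finset.mem_univ, if_true, Finset.sum_mul]
  exact Finset.sum_congr rfl fun a _ => Finset.sum_comm

lemma trace_mul_one_kronecker [DecidableEq κA] (M : Matrix (κA × κB) (κA × κB) ℂ)
    (N : Matrix κB κB ℂ) :
    (M * ((1 : Matrix κA κA ℂ) ⊗ₖ N)).trace = (ptraceA M * N).trace := by
  simp only [Matrix.trace, Matrix.diag_apply, Matrix.mul_apply, Matrix.kroneckerMap_apply,
    ptraceA, Matrix.of_apply, Matrix.one_apply, Fintype.sum_prod_type, ite_mul, one_mul,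
    zero_mul, mul_ite, mul_zero, Finset.sum_ite_irrel, Finset.sum_const_zero, Finset.sum_ite_eq',
    Finset.mem_univ, if_true, Finset.sum_mul]
  rw [Finset.sum_comm]
  exact Finset.sum_congr rfl fun _ _ => Finset.sum_comm

lemma ptraceB_conj_kronecker [DecidableEq κB] [DecidableEq κB'] (ρ : Matrix (κA × κB) (κA × κB) ℂ)
    (V : Matrix κA' κA ℂ) (hW : Wᴴ * W = 1) :
    ptraceB ((V ⊗ₖ W) * ρ * (V ⊗ₖ W)ᴴ) = V * ptraceB ρ * Vᴴ := by
  refine ext_iff_trace_mul_right.mpr fun N => ?_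
  calc (ptraceB ((V ⊗ₖ W) * ρ * (V ⊗ₖ W)ᴴ) * N).trace
      = ((V ⊗ₖ W) * ρ * (V ⊗ₖ W)ᴴ * (N ⊗ₖ (1 : Matrix κB' κB' ℂ))).trace :=
        (trace_mul_kronecker_one _ _).symm
    _ = (ρ * ((Vᴴ * N * V) ⊗ₖ (1 : Matrix κB κB ℂ))).trace := by
        rw [trace_conj_mul, conjTranspose_kronecker, ← mul_kronecker_mul, ← mul_kronecker_mul,
          Matrix.mul_one, hW]
    _ = (V * ptraceB ρ * Vᴴ * N).trace := by
        rw [trace_mul_kronecker_one, trace_mul_cycle', Matrix.mul_assoc, Matrix.mul_assoc]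

lemma ptraceA_conj_kronecker [DecidableEq κA] [DecidableEq κA'] (ρ : Matrix (κA × κB) (κA × κB) ℂ)
    (hV : Vᴴ * V = 1) (W : Matrix κB' κB ℂ) :
    ptraceA ((V ⊗ₖ W) * ρ * (V ⊗ₖ W)ᴴ) = W * ptraceA ρ * Wᴴ := by
  refine ext_iff_trace_mul_right.mpr fun N => ?_
  calc (ptraceA ((V ⊗ₖ W) * ρ * (V ⊗ₖ W)ᴴ) * N).trace
      = ((V ⊗ₖ W) * ρ * (V ⊗ₖ W)ᴴ * ((1 : Matrix κA' κA' ℂ) ⊗ₖ N)).trace :=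
        (trace_mul_one_kronecker _ _).symm
    _ = (ρ * ((1 : Matrix κA κA ℂ) ⊗ₖ (Wᴴ * N * W))).trace := by
        rw [trace_conj_mul, conjTranspose_kronecker, ← mul_kronecker_mul, ← mul_kronecker_mul,
          Matrix.mul_one, hV]
    _ = (W * ptraceA ρ * Wᴴ * N).trace := by
        rw [trace_mul_one_kronecker, trace_mul_cycle', Matrix.mul_assoc, Matrix.mul_assoc]

lemma trace_kronecker_conj_mul [DecidableEq κA] [DecidableEq κB] (hV : Vᴴ * V = 1)
    (hW : Wᴴ * W = 1) (X : Matrix κA κA ℂ) (Y : Matrix κB κB ℂ) :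
    (((V * X * Vᴴ) ⊗ₖ (W * Y * Wᴴ)ᴴ) * ((V ⊗ₖ W) * ρ * (V ⊗ₖ W)ᴴ)).trace =
      ((X ⊗ₖ Yᴴ) * ρ).trace := by
  have hK : (V ⊗ₖ W)ᴴ * (V ⊗ₖ W) = 1 := by
    rw [conjTranspose_kronecker, ← mul_kronecker_mul, hV, hW, one_kronecker_one]
  rw [conjTranspose_conj, mul_kronecker_mul, mul_kronecker_mul, ← conjTranspose_kronecker,
    conj_mul_conj_of_isometry hK, trace_conj_of_isometry hK]

end Bipartite

lemma ptraceB_isHermitian {κA κB : Type*} [Fintype κB] {ρ : Matrix (κA × κB) (κA × κB) ℂ}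
    (hρ : ρ.IsHermitian) : (ptraceB ρ).IsHermitian :=
  IsHermitian.ext fun a a' => by
    simp only [ptraceB, of_apply, star_sum]
    exact Finset.sum_congr rfl fun b _ => hρ.apply (a, b) (a', b)

lemma ptraceA_isHermitian {κA κB : Type*} [Fintype κA] {ρ : Matrix (κA × κB) (κA × κB) ℂ}
    (hρ : ρ.IsHermitian) : (ptraceA ρ).IsHermitian :=
  IsHermitian.ext fun b b' => by
    simp only [ptraceA, of_apply, star_sum]
    exact Finset.sum_congr rfl fun a _ => hρ.apply (a, b) (a, b')

section Correlation

variable {κA κB κA' κB' : Type*} [Fintype κA] [DecidableEq κA] [Fintype κB] [DecidableEq κB]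
  [Fintype κA'] [DecidableEq κA'] [Fintype κB'] [DecidableEq κB']
  {ρ : Matrix (κA × κB) (κA × κB) ℂ} {V : Matrix κA' κA ℂ} {W : Matrix κB' κB ℂ}

lemma muF_conj_isometry (f : ℝ → ℝ) (hρ : ρ.IsHermitian) (hV : Vᴴ * V = 1) (hW : Wᴴ * W = 1) :
    muF f ((V ⊗ₖ W) * ρ * (V ⊗ₖ W)ᴴ) = muF f ρ := by
  have hA := ptraceB_isHermitian hρ
  have hB := ptraceA_isHermitian hρ
  rw [muF, muF, ptraceB_conj_kronecker ρ V hW, ptraceA_conj_kronecker ρ hV W]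
  congr 1
  ext r
  constructor
  · rintro ⟨X', Y', hXh, hYh, hXs, hYs, hXt, hYt, hXi, hYi, rfl⟩
    obtain ⟨X, rfl⟩ := exists_conj_of_supported hV hA hXs
    obtain ⟨Y, rfl⟩ := exists_conj_of_supported hW hB hYs
    simp only [isHermitian_conj_iff, supported_conj_iff, trace_conj_mul_conj,
      innerF_conj_isometry, hV, hW, hA, hB] at hXh hYh hXs hYs hXt hYt hXi hYi
    exact ⟨X, Y, hXh, hYh, hXs, hYs, hXt, hYt, hXi, hYi, by rw [trace_kronecker_conj_mul hV hW]⟩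
  · rintro ⟨X, Y, hXh, hYh, hXs, hYs, hXt, hYt, hXi, hYi, rfl⟩
    refine ⟨V * X * Vᴴ, W * Y * Wᴴ, ?_⟩
    simp only [isHermitian_conj_iff, supported_conj_iff, trace_conj_mul_conj,
      innerF_conj_isometry, trace_kronecker_conj_mul, hV, hW, hA, hB, and_true]
    exact ⟨hXh, hYh, hXs, hYs, hXt, hYt, hXi, hYi⟩

lemma muLin_conj_isometry (f : ℝ → ℝ) (hρ : ρ.IsHermitian) (hV : Vᴴ * V = 1)
    (hW : Wᴴ * W = 1) :
    muLin f ((V ⊗ₖ W) * ρ * (V ⊗ₖ W)ᴴ) = muLin f ρ := by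
  have hA := ptraceB_isHermitian hρ
  have hB := ptraceA_isHermitian hρ
  rw [muLin, muLin, ptraceB_conj_kronecker ρ V hW, ptraceA_conj_kronecker ρ hV W]
  congr 1
  ext r
  constructor
  · rintro ⟨X', Y', hXs, hYs, hXt, hYt, hXi, hYi, rfl⟩
    obtain ⟨X, rfl⟩ := exists_conj_of_supported hV hA hXs
    obtain ⟨Y, rfl⟩ := exists_conj_of_supported hW hB hYs
    simp only [supported_conj_iff, trace_conj_mul_conj, innerF_conj_isometry, hV, hW, hA, hB]
      at hXs hYs hXt hYt hXi hYi
    exact ⟨X, Y, hXs, hYs, hXt, hYt, hXi, hYi, by rw [trace_kronecker_conj_mul hV hW]⟩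
  · rintro ⟨X, Y, hXs, hYs, hXt, hYt, hXi, hYi, rfl⟩
    refine ⟨V * X * Vᴴ, W * Y * Wᴴ, ?_⟩
    simp only [supported_conj_iff, trace_conj_mul_conj, innerF_conj_isometry,
      trace_kronecker_conj_mul, hV, hW, hA, hB, and_true]
    exact ⟨hXs, hYs, hXt, hYt, hXi, hYi⟩

end Correlation

theorem statement3_general {dA dB dA' dB' : ℕ} (f : ℝ → ℝ)
    (ρ : Matrix (Fin dA × Fin dB) (Fin dA × Fin dB) ℂ) (hρ : IsDensity ρ)
    (V : Matrix (Fin dA') (Fin dA) ℂ) (hV : Vᴴ * V = 1)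
    (W : Matrix (Fin dB') (Fin dB) ℂ) (hW : Wᴴ * W = 1) :
    muF f ρ = muF f ((V ⊗ₖ W) * ρ * (V ⊗ₖ W)ᴴ) ∧
    muLin f ρ = muLin f ((V ⊗ₖ W) * ρ * (V ⊗ₖ W)ᴴ) :=
  ⟨(muF_conj_isometry f hρ.1.isHermitian hV hW).symm,
    (muLin_conj_isometry f hρ.1.isHermitian hV hW).symm⟩

/-- The `f`-maximal correlation coefficients are invariant under local
isometries. -/
theorem statement3 {dA dB dA' dB' : ℕ} (f : ℝ → ℝ)
    (hf : IsOperatorMonotone f) (hf0 : ∀ x : ℝ, 0 < x → 0 ≤ f x) (hf1 : f 1 = 1)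
    (ρ : Matrix (Fin dA × Fin dB) (Fin dA × Fin dB) ℂ) (hρ : IsDensity ρ)
    (V : Matrix (Fin dA') (Fin dA) ℂ) (hV : Vᴴ * V = 1)
    (W : Matrix (Fin dB') (Fin dB) ℂ) (hW : Wᴴ * W = 1) :
    muF f ρ = muF f ((V ⊗ₖ W) * ρ * (V ⊗ₖ W)ᴴ) ∧
    muLin f ρ = muLin f ((V ⊗ₖ W) * ρ * (V ⊗ₖ W)ᴴ) :=
  statement3_general f ρ hρ V hV W hW

end QPaper
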